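/- Let ⟨A,B⟩ be a pairing of regular multiplier Hopf algebras, 𝓓 = A⋈B the Drinfel'd double and 𝓗 = A#B the Heisenberg double, regarded as a Yetter-Drinfel'd 𝓓-module algebra via the action (a⋈b)·(a'#b') = a_(3)(b_(1)▶a')S^{-1}(a_(2)) # (b_(2)b'S(b_(3)))◀S^{-1}(a_(1)) and the coaction Γ determined by ((a'⋈b')⊗1)Γ(a#b) = (a'⋈b')(a_(2)⋈b_(1)) ⊗ a_(1)#b_(2). Then 𝓗 is braided 𝓓-commutative: for all h, h' ∈ 𝓗 one has h'h = (h'_(-1)·h)h'_(0). -/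

import Mathlib

open TensorProduct LinearMap
open scoped TensorProduct

/-! ## A framework for (an algebraic model of) regular multiplier Hopf algebras

A regular multiplier Hopf algebra `(A, Δ)` is a non-degenerate (possibly non-unital)
algebra `A` together with a coassociative comultiplication (here modelled as a map
`A →ₗ[K] A ⊗[K] A`), such that the canonical maps `T₁ : a ⊗ b ↦ Δ(a)(1 ⊗ b)` and
`T₂ : a ⊗ b ↦ (a ⊗ 1)Δ(b)` are bijective; regularity is encoded by the bijectivity of
the antipode.  The counit and antipode axioms are stated in their "covered"
(multiplied) form, as appropriate for non-unital algebras. -/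
structure RegularMultiplierHopf (K : Type) [Field K]
    (A : Type) [NonUnitalRing A] [Module K A] [SMulCommClass K A A] [IsScalarTower K A A] :
    Type where
  comul : A →ₗ[K] A ⊗[K] A
  counit : A →ₗ[K] K
  antipode : A ≃ₗ[K] A
  mul_nondeg_left : ∀ a : A, (∀ x : A, a * x = 0) → a = 0
  mul_nondeg_right : ∀ a : A, (∀ x : A, x * a = 0) → a = 0
  comul_mul : ∀ a b : A, comul (a * b) = comul a * comul b
  coassoc : ∀ a : A,
    (TensorProduct.assoc K A A A) ((LinearMap.rTensor A comul) (comul a))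
      = (LinearMap.lTensor A comul) (comul a)
  counit_left : ∀ a : A, (TensorProduct.lid K A) ((LinearMap.rTensor A counit) (comul a)) = a
  counit_right : ∀ a : A, (TensorProduct.rid K A) ((LinearMap.lTensor A counit) (comul a)) = a
  counit_mul : ∀ a b : A, counit (a * b) = counit a * counit b
  antipode_mul_left : ∀ a x : A,
    (LinearMap.mul' K A) ((LinearMap.rTensor A antipode.toLinearMap) (comul a)) * x
      = counit a • x
  antipode_mul_right : ∀ a x : A,
    x * (LinearMap.mul' K A) ((LinearMap.lTensor A antipode.toLinearMap) (comul a))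
      = counit a • x
  T1_bijective : Function.Bijective fun z : A ⊗[K] A =>
    (LinearMap.lTensor A (LinearMap.mul' K A))
      ((TensorProduct.assoc K A A A) ((LinearMap.rTensor A comul) z))
  T2_bijective : Function.Bijective fun z : A ⊗[K] A =>
    (LinearMap.rTensor A (LinearMap.mul' K A))
      ((TensorProduct.assoc K A A A).symm ((LinearMap.lTensor A comul) z))

namespace RegularMultiplierHopf

variable {K : Type} [Field K]
variable {A : Type} [NonUnitalRing A] [Module K A] [SMulCommClass K A A] [IsScalarTower K A A]

/-- The iterated comultiplication `a ↦ a₍₁₎ ⊗ (a₍₂₎ ⊗ a₍₃₎)`. -/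
noncomputable def comul2 (h : RegularMultiplierHopf K A) : A →ₗ[K] A ⊗[K] (A ⊗[K] A) :=
  (LinearMap.lTensor A h.comul) ∘ₗ h.comul

end RegularMultiplierHopf

/-- A pairing `⟨A, B⟩` of regular multiplier Hopf algebras: a non-degenerate bilinear
form for which the product of each algebra is dual to the comultiplication of the
other one, compatible with the antipodes.  The duality conditions are expressed via
arbitrary finite Sweedler expansions of the comultiplications. -/
structure MHAPairing (K : Type) [Field K]
    (A : Type) [NonUnitalRing A] [Module K A] [SMulCommClass K A A] [IsScalarTower K A A]
    (B : Type) [NonUnitalRing B] [Module K B] [SMulCommClass K B B] [IsScalarTower K B B]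
    (hA : RegularMultiplierHopf K A) (hB : RegularMultiplierHopf K B) : Type where
  pair : A →ₗ[K] B →ₗ[K] K
  nondeg_left : ∀ a : A, (∀ b : B, pair a b = 0) → a = 0
  nondeg_right : ∀ b : B, (∀ a : A, pair a b = 0) → b = 0
  pair_mul_comul : ∀ (a a' : A) (b : B) (s : Finset ℕ) (b1 b2 : ℕ → B),
    hB.comul b = ∑ i ∈ s, b1 i ⊗ₜ[K] b2 i →
    pair (a * a') b = ∑ i ∈ s, pair a (b1 i) * pair a' (b2 i)
  pair_comul_mul : ∀ (a : A) (b b' : B) (s : Finset ℕ) (a1 a2 : ℕ → A),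
    hA.comul a = ∑ i ∈ s, a1 i ⊗ₜ[K] a2 i →
    pair a (b * b') = ∑ i ∈ s, pair (a1 i) b * pair (a2 i) b'
  pair_antipode : ∀ (a : A) (b : B), pair (hA.antipode a) b = pair a (hB.antipode b)

namespace MHAPairing

variable {K : Type} [Field K]
variable {A : Type} [NonUnitalRing A] [Module K A] [SMulCommClass K A A] [IsScalarTower K A A]
variable {B : Type} [NonUnitalRing B] [Module K B] [SMulCommClass K B B] [IsScalarTower K B B]
variable {hA : RegularMultiplierHopf K A} {hB : RegularMultiplierHopf K B}

/-- `b ▶ a = ⟨a₍₂₎, b⟩ a₍₁₎`, the left regular action of `B` on `A`. -/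
noncomputable def lact (P : MHAPairing K A B hA hB) (b : B) (a : A) : A :=
  (TensorProduct.rid K A) ((LinearMap.lTensor A (P.pair.flip b)) (hA.comul a))

/-- `a ◀ b = ⟨a₍₁₎, b⟩ a₍₂₎`, the right regular action of `B` on `A`. -/
noncomputable def ract (P : MHAPairing K A B hA hB) (a : A) (b : B) : A :=
  (TensorProduct.lid K A) ((LinearMap.rTensor A (P.pair.flip b)) (hA.comul a))

/-- `a ▶ b = ⟨a, b₍₂₎⟩ b₍₁₎`, the left regular action of `A` on `B`. -/
noncomputable def lactB (P : MHAPairing K A B hA hB) (a : A) (b : B) : B :=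
  (TensorProduct.rid K B) ((LinearMap.lTensor B (P.pair a)) (hB.comul b))

/-- `b ◀ a = ⟨a, b₍₁₎⟩ b₍₂₎`, the right regular action of `A` on `B`. -/
noncomputable def ractB (P : MHAPairing K A B hA hB) (b : B) (a : A) : B :=
  (TensorProduct.lid K B) ((LinearMap.rTensor B (P.pair a)) (hB.comul b))

end MHAPairing

/-!
The action factors as `(a ⋈ b) · h = (a ⋈ 1) · ((1 ⋈ b) · h)` with
`(1 ⋈ b) · (x # y) = (b₍₁₎ ▶ x) # b₍₂₎ y S(b₍₃₎)` and
`(a ⋈ 1) · (x # y) = a₍₃₎ x S⁻¹(a₍₂₎) # y ◀ S⁻¹(a₍₁₎)`, and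
`h'₍₋₁₎ ⊗ h'₍₀₎ = (a'₍₂₎ ⋈ b'₍₁₎) ⊗ (a'₍₁₎ # b'₍₂₎)` for `h' = a' # b'`.
Two cancellations then turn `(h'₍₋₁₎ · h) h'₍₀₎` into `h' h`:
* `((a₍₂₎ ⋈ 1) · k)(a₍₁₎ # c) = a k c` for `k = x # y`: moving `y ◀ S⁻¹(a₍₂₎)` past `a₍₁₎` produces
  the pairing `⟨S⁻¹(a₍₃₎) a₍₂₎, y₍₁₎⟩ = ε(a₍₂₎) ε(y₍₁₎)`, and then `a₍₃₎ x S⁻¹(a₍₂₎) a₍₁₎ = a x`;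
* `a' ((1 ⋈ b'₍₁₎) · k) b'₍₂₎ = (a' # b') k`, since `b'₍₂₎ y S(b'₍₃₎) b'₍₄₎ = b'₍₂₎ y`.
Without units, `S⁻¹(a₍₂₎) a₍₁₎ = ε(a)` holds only as a two-sided multiplier; it follows from the
antipode axioms once `S` is shown to be anti-multiplicative.
-/

theorem TensorProduct.exists_sum_range_tmul {R M N : Type*} [CommSemiring R] [AddCommMonoid M]
    [AddCommMonoid N] [Module R M] [Module R N] (x : M ⊗[R] N) :
    ∃ (n : ℕ) (f : ℕ → M) (g : ℕ → N), x = ∑ i ∈ Finset.range n, f i ⊗ₜ[R] g i := by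
  induction x using TensorProduct.induction_on with
  | zero => exact ⟨0, 0, 0, by simp⟩
  | tmul m n => exact ⟨1, fun _ => m, fun _ => n, by simp⟩
  | add x y hx hy =>
    obtain ⟨n, f, g, rfl⟩ := hx
    obtain ⟨m, f', g', rfl⟩ := hy
    refine ⟨n + m, fun i => if i < n then f i else f' (i - n),
      fun i => if i < n then g i else g' (i - n), ?_⟩
    rw [Finset.sum_range_add]
    congr 1
    · exact Finset.sum_congr rfl fun i hi => by simp [Finset.mem_range.mp hi]
    · simp

namespace RegularMultiplierHopf

variable {K : Type} [Field K]
variable {A : Type} [NonUnitalRing A] [Module K A] [SMulCommClass K A A] [IsScalarTower K A A]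
variable (h : RegularMultiplierHopf K A)
variable {ι κ κ' : Type*} {s : Finset ι} {f g : ι → A} {a : A}

include h in
theorem exists_comul_eq_sum (a : A) :
    ∃ S : Finset (A × A), h.comul a = ∑ p ∈ S, p.1 ⊗ₜ[K] p.2 :=
  TensorProduct.exists_finset _

theorem sum_counit_smul_left (hz : h.comul a = ∑ i ∈ s, f i ⊗ₜ[K] g i) :
    ∑ i ∈ s, h.counit (f i) • g i = a := by
  simpa [hz] using h.counit_left a

theorem sum_counit_smul_right (hz : h.comul a = ∑ i ∈ s, f i ⊗ₜ[K] g i) :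
    ∑ i ∈ s, h.counit (g i) • f i = a := by
  simpa [hz] using h.counit_right a

theorem sum_antipode_mul_mul (hz : h.comul a = ∑ i ∈ s, f i ⊗ₜ[K] g i) (x : A) :
    (∑ i ∈ s, h.antipode (f i) * g i) * x = h.counit a • x := by
  simpa [hz] using h.antipode_mul_left a x

theorem mul_sum_mul_antipode (hz : h.comul a = ∑ i ∈ s, f i ⊗ₜ[K] g i) (x : A) :
    x * ∑ i ∈ s, f i * h.antipode (g i) = h.counit a • x := by
  simpa [hz] using h.antipode_mul_right a x

theorem mul_sum_antipode_mul (hz : h.comul a = ∑ i ∈ s, f i ⊗ₜ[K] g i) (x : A) :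
    x * ∑ i ∈ s, h.antipode (f i) * g i = h.counit a • x := by
  refine sub_eq_zero.mp (h.mul_nondeg_left _ fun y => ?_)
  rw [sub_mul, mul_assoc, h.sum_antipode_mul_mul hz, mul_smul_comm, smul_mul_assoc, sub_self]

theorem coassoc_sum {M : Type*} [AddCommGroup M] [Module K M] (G : A ⊗[K] (A ⊗[K] A) →ₗ[K] M)
    (hz : h.comul a = ∑ i ∈ s, f i ⊗ₜ[K] g i)
    {u : ι → Finset κ} {f₁ f₂ : ι → κ → A}
    (hf : ∀ i, h.comul (f i) = ∑ j ∈ u i, f₁ i j ⊗ₜ[K] f₂ i j)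
    {v : ι → Finset κ'} {g₁ g₂ : ι → κ' → A}
    (hg : ∀ i, h.comul (g i) = ∑ j ∈ v i, g₁ i j ⊗ₜ[K] g₂ i j) :
    ∑ i ∈ s, ∑ j ∈ u i, G (f₁ i j ⊗ₜ[K] (f₂ i j ⊗ₜ[K] g i))
      = ∑ i ∈ s, ∑ j ∈ v i, G (f i ⊗ₜ[K] (g₁ i j ⊗ₜ[K] g₂ i j)) := by
  simpa [hz, hf, hg, map_sum, sum_tmul, tmul_sum] using congrArg G (h.coassoc a)

theorem sum_apply_mul_mul_antipode (φ : A →ₗ[K] A) (hz : h.comul a = ∑ i ∈ s, f i ⊗ₜ[K] g i)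
    {u : ι → Finset κ} {f₁ f₂ : ι → κ → A}
    (hf : ∀ i, h.comul (f i) = ∑ j ∈ u i, f₁ i j ⊗ₜ[K] f₂ i j) :
    ∑ i ∈ s, ∑ j ∈ u i, φ (f₁ i j) * (f₂ i j * h.antipode (g i)) = φ a := by
  choose T hT using h.exists_comul_eq_sum
  let G := mul' K A ∘ₗ map φ (mul' K A ∘ₗ lTensor A h.antipode.toLinearMap)
  have key := h.coassoc_sum G hz hf (fun i => hT (g i))
  simp only [G, coe_comp, Function.comp_apply, map_tmul, lTensor_tmul, mul'_apply,
    LinearEquiv.coe_coe] at key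
  rw [key, ← h.sum_counit_smul_right hz, map_sum]
  refine Finset.sum_congr rfl fun i _ => ?_
  rw [← Finset.mul_sum, h.mul_sum_mul_antipode (hT (g i)), map_smul]

theorem antipode_mul (a b : A) : h.antipode (a * b) = h.antipode b * h.antipode a := by
  choose T hT using h.exists_comul_eq_sum
  have hΔ : ∀ x y : A, h.comul (x * y)
      = ∑ r ∈ T x ×ˢ T y, (r.1.1 * r.2.1) ⊗ₜ[K] (r.1.2 * r.2.2) := by
    intro x y
    rw [h.comul_mul, hT x, hT y, Finset.sum_mul_sum, Finset.sum_product]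
    simp only [Algebra.TensorProduct.tmul_mul_tmul]
  -- `X = S(a₍₁₎b₍₁₎) a₍₂₎b₍₂₎ S(b₍₃₎) S(a₍₃₎)`: collapsing `S((ab)₍₁₎)(ab)₍₂₎` gives `S(b) S(a)`,
  -- collapsing `b₍₂₎ S(b₍₃₎)` and then `a₍₂₎ S(a₍₃₎)` gives `S(ab)`.
  set X := ∑ p ∈ T a, ∑ q ∈ T b, (∑ r ∈ T p.1 ×ˢ T q.1,
    h.antipode (r.1.1 * r.2.1) * (r.1.2 * r.2.2)) * (h.antipode q.2 * h.antipode p.2)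
  have hX₁ : X = h.antipode b * h.antipode a := by
    simp only [X, h.sum_antipode_mul_mul (hΔ _ _), h.counit_mul]
    conv_rhs => rw [← h.sum_counit_smul_left (hT a), ← h.sum_counit_smul_left (hT b)]
    simp only [map_sum, map_smul, Finset.sum_mul, Finset.mul_sum, smul_mul_smul_comm, mul_comm]
  have hX₂ : X = h.antipode (a * b) := by
    have inner : ∀ p' : A × A, ∑ q ∈ T b, ∑ q' ∈ T q.1,
        h.antipode (p'.1 * q'.1) * p'.2 * (q'.2 * h.antipode q.2)
          = h.antipode (p'.1 * b) * p'.2 := by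
      intro p'
      simpa using h.sum_apply_mul_mul_antipode
        (mulRight K p'.2 ∘ₗ h.antipode.toLinearMap ∘ₗ mulLeft K p'.1) (hT b) (fun q => hT q.1)
    have outer := h.sum_apply_mul_mul_antipode (h.antipode.toLinearMap ∘ₗ mulRight K b) (hT a)
      (fun p => hT p.1)
    simp only [coe_comp, LinearEquiv.coe_coe, Function.comp_apply, mulRight_apply] at outer
    rw [← outer]
    refine Finset.sum_congr rfl fun p _ => ?_
    simp only [Finset.sum_product, Finset.sum_mul]
    rw [Finset.sum_comm]
    refine Finset.sum_congr rfl fun p' _ => ?_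
    rw [← mul_assoc, ← inner p', Finset.sum_mul]
    refine Finset.sum_congr rfl fun q _ => ?_
    rw [Finset.sum_mul]
    exact Finset.sum_congr rfl fun q' _ => by simp only [mul_assoc]
  rw [← hX₁, hX₂]

theorem antipode_symm_mul (a b : A) :
    h.antipode.symm (a * b) = h.antipode.symm b * h.antipode.symm a :=
  h.antipode.injective <| by simp only [antipode_mul, LinearEquiv.apply_symm_apply]

theorem sum_antipode_symm_mul_mul (hz : h.comul a = ∑ i ∈ s, f i ⊗ₜ[K] g i) (x : A) :
    (∑ i ∈ s, h.antipode.symm (g i) * f i) * x = h.counit a • x := by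
  have he : ∑ i ∈ s, h.antipode.symm (g i) * f i
      = h.antipode.symm (∑ i ∈ s, h.antipode (f i) * g i) := by
    simp [map_sum, antipode_symm_mul]
  rw [he, ← h.antipode.symm_apply_apply x, ← antipode_symm_mul, h.mul_sum_antipode_mul hz,
    map_smul]

theorem mul_sum_antipode_symm_mul (hz : h.comul a = ∑ i ∈ s, f i ⊗ₜ[K] g i) (x : A) :
    x * ∑ i ∈ s, h.antipode.symm (g i) * f i = h.counit a • x := by
  have he : ∑ i ∈ s, h.antipode.symm (g i) * f i
      = h.antipode.symm (∑ i ∈ s, h.antipode (f i) * g i) := by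
    simp [map_sum, antipode_symm_mul]
  rw [he, ← h.antipode.symm_apply_apply x, ← antipode_symm_mul, h.sum_antipode_mul_mul hz,
    map_smul]

noncomputable def adjoint : A →ₗ[K] A →ₗ[K] A :=
  lift ((llcomp K A A A).compl₁₂ (mul K A) ((mul K A).flip ∘ₗ h.antipode.toLinearMap)) ∘ₗ h.comul

noncomputable def adjointCop : A →ₗ[K] A →ₗ[K] A :=
  lift ((llcomp K A A A).compl₁₂ ((mul K A).flip ∘ₗ h.antipode.symm.toLinearMap) (mul K A))
    ∘ₗ h.comul

theorem adjoint_apply (hz : h.comul a = ∑ i ∈ s, f i ⊗ₜ[K] g i) (x : A) :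
    h.adjoint a x = ∑ i ∈ s, f i * x * h.antipode (g i) := by
  simp [adjoint, hz, mul_assoc]

theorem adjointCop_apply (hz : h.comul a = ∑ i ∈ s, f i ⊗ₜ[K] g i) (x : A) :
    h.adjointCop a x = ∑ i ∈ s, g i * x * h.antipode.symm (f i) := by
  simp [adjointCop, hz]

theorem sum_adjoint_mul (hz : h.comul a = ∑ i ∈ s, f i ⊗ₜ[K] g i) (x : A) :
    ∑ i ∈ s, h.adjoint (f i) x * g i = a * x := by
  choose T hT using h.exists_comul_eq_sum
  let G := mul' K A ∘ₗ map (mulRight K x) (mul' K A ∘ₗ rTensor A h.antipode.toLinearMap)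
  have key := h.coassoc_sum G hz (fun i => hT (f i)) (fun i => hT (g i))
  simp only [G, coe_comp, Function.comp_apply, map_tmul, rTensor_tmul, mul'_apply,
    LinearEquiv.coe_coe, mulRight_apply, ← Finset.mul_sum, h.mul_sum_antipode_mul (hT _),
    ← smul_mul_assoc] at key
  rw [← h.sum_counit_smul_right hz, Finset.sum_mul, ← key]
  simp [h.adjoint_apply (hT _), Finset.sum_mul, mul_assoc]

theorem sum_adjointCop_mul (hz : h.comul a = ∑ i ∈ s, f i ⊗ₜ[K] g i) (x : A) :
    ∑ i ∈ s, h.adjointCop (g i) x * f i = a * x := by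
  choose T hT using h.exists_comul_eq_sum
  let G := mul' K A ∘ₗ map (mulRight K x) (mul' K A ∘ₗ (TensorProduct.comm K A A).toLinearMap ∘ₗ
    lTensor A h.antipode.symm.toLinearMap) ∘ₗ (TensorProduct.comm K (A ⊗[K] A) A).toLinearMap ∘ₗ
    (TensorProduct.assoc K A A A).symm.toLinearMap
  have key := h.coassoc_sum G hz (fun i => hT (f i)) (fun i => hT (g i))
  simp only [G, coe_comp, Function.comp_apply, LinearEquiv.coe_coe, assoc_symm_tmul, comm_tmul,
    map_tmul, lTensor_tmul, mul'_apply, mulRight_apply, ← Finset.mul_sum,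
    h.mul_sum_antipode_symm_mul (hT _), ← smul_mul_assoc] at key
  rw [← h.sum_counit_smul_left hz, Finset.sum_mul, key]
  simp [h.adjointCop_apply (hT _), Finset.sum_mul, mul_assoc]

end RegularMultiplierHopf

section TwistedMul

variable {K : Type} [Field K]
variable {A : Type} [NonUnitalRing A] [Module K A] [SMulCommClass K A A] [IsScalarTower K A A]
variable {B : Type} [NonUnitalRing B] [Module K B] [SMulCommClass K B B] [IsScalarTower K B B]

/-- The product on `A ⊗ B` with commutation rule `b a' = τ(b ⊗ a')`. -/
noncomputable def twistedMul (τ : B ⊗[K] A →ₗ[K] A ⊗[K] B) :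
    (A ⊗[K] B) →ₗ[K] (A ⊗[K] B) →ₗ[K] (A ⊗[K] B) :=
  TensorProduct.curry <| map (mul' K A) (mul' K B) ∘ₗ
    (TensorProduct.assoc K A A (B ⊗[K] B)).symm.toLinearMap ∘ₗ
    lTensor A (TensorProduct.assoc K A B B).toLinearMap ∘ₗ lTensor A (rTensor B τ) ∘ₗ
    lTensor A (TensorProduct.assoc K B A B).symm.toLinearMap ∘ₗ
    (TensorProduct.assoc K A B (A ⊗[K] B)).toLinearMap

theorem twistedMul_tmul (τ : B ⊗[K] A →ₗ[K] A ⊗[K] B) (a a' : A) (b b' : B) :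
    twistedMul τ (a ⊗ₜ b) (a' ⊗ₜ b') = map (mulLeft K a) (mulRight K b') (τ (b ⊗ₜ a')) := by
  simp only [twistedMul, curry_apply, coe_comp, LinearEquiv.coe_coe, Function.comp_apply,
    assoc_tmul, lTensor_tmul, assoc_symm_tmul, rTensor_tmul]
  induction τ (b ⊗ₜ a') using TensorProduct.induction_on with
  | zero => simp
  | tmul x y => simp
  | add x y hx hy => simp only [add_tmul, tmul_add, map_add, hx, hy]

end TwistedMul

section Coaction

variable {K : Type} [Field K]
variable {A : Type} [NonUnitalRing A] [Module K A] [SMulCommClass K A A] [IsScalarTower K A A]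
variable {B : Type} [NonUnitalRing B] [Module K B] [SMulCommClass K B B] [IsScalarTower K B B]

noncomputable def heisenbergCoaction (hA : RegularMultiplierHopf K A)
    (hB : RegularMultiplierHopf K B) : A ⊗[K] B →ₗ[K] (A ⊗[K] B) ⊗[K] (A ⊗[K] B) :=
  (tensorTensorTensorComm K A A B B).toLinearMap ∘ₗ
    rTensor (B ⊗[K] B) (TensorProduct.comm K A A).toLinearMap ∘ₗ map hA.comul hB.comul

theorem heisenbergCoaction_tmul {hA : RegularMultiplierHopf K A} {hB : RegularMultiplierHopf K B}
    {ι κ : Type*} {s : Finset ι} {t : Finset κ} {a₁ a₂ : ι → A} {b₁ b₂ : κ → B} {a : A} {b : B}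
    (ha : hA.comul a = ∑ i ∈ s, a₁ i ⊗ₜ[K] a₂ i) (hb : hB.comul b = ∑ j ∈ t, b₁ j ⊗ₜ[K] b₂ j) :
    heisenbergCoaction hA hB (a ⊗ₜ b)
      = ∑ i ∈ s, ∑ j ∈ t, (a₂ i ⊗ₜ b₁ j) ⊗ₜ (a₁ i ⊗ₜ b₂ j) := by
  simp [heisenbergCoaction, ha, hb, sum_tmul, tmul_sum]
  exact Finset.sum_comm

end Coaction

namespace MHAPairing

variable {K : Type} [Field K]
variable {A : Type} [NonUnitalRing A] [Module K A] [SMulCommClass K A A] [IsScalarTower K A A]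
variable {B : Type} [NonUnitalRing B] [Module K B] [SMulCommClass K B B] [IsScalarTower K B B]
variable {hA : RegularMultiplierHopf K A} {hB : RegularMultiplierHopf K B}
variable (P : MHAPairing K A B hA hB)
variable {ι κ : Type*} {s : Finset ι} {t : Finset κ}

noncomputable def lactₗ : B →ₗ[K] A →ₗ[K] A :=
  LinearMap.mk₂ K P.lact (by simp [lact]) (by simp [lact]) (by simp [lact]) (by simp [lact])

noncomputable def ractₗ : A →ₗ[K] B →ₗ[K] A :=
  LinearMap.mk₂ K P.ract (by simp [ract]) (by simp [ract]) (by simp [ract]) (by simp [ract])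

noncomputable def ractBₗ : B →ₗ[K] A →ₗ[K] B :=
  LinearMap.mk₂ K P.ractB (by simp [ractB]) (by simp [ractB]) (by simp [ractB])
    (by simp [ractB])

@[simp] theorem lactₗ_apply (b : B) (a : A) : P.lactₗ b a = P.lact b a := rfl

@[simp] theorem ractₗ_apply (a : A) (b : B) : P.ractₗ a b = P.ract a b := rfl

@[simp] theorem ractBₗ_apply (b : B) (a : A) : P.ractBₗ b a = P.ractB b a := rfl

theorem pair_mul_eq_sum {f g : ι → B} {b : B} (hz : hB.comul b = ∑ i ∈ s, f i ⊗ₜ[K] g i)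
    (x y : A) : P.pair (x * y) b = ∑ i ∈ s, P.pair x (f i) * P.pair y (g i) := by
  obtain ⟨n, f', g', hn⟩ := TensorProduct.exists_sum_range_tmul (hB.comul b)
  calc P.pair (x * y) b = ∑ i ∈ Finset.range n, P.pair x (f' i) * P.pair y (g' i) :=
        P.pair_mul_comul x y b _ f' g' hn
    _ = mul' K K (map (P.pair x) (P.pair y) (hB.comul b)) := by simp [hn]
    _ = ∑ i ∈ s, P.pair x (f i) * P.pair y (g i) := by simp [hz]

theorem lact_eq_sum {f g : ι → A} {a : A} (hz : hA.comul a = ∑ i ∈ s, f i ⊗ₜ[K] g i) (b : B) :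
    P.lact b a = ∑ i ∈ s, P.pair (g i) b • f i := by
  simp [lact, hz]

theorem ractB_eq_sum {f g : ι → B} {w : B} (hz : hB.comul w = ∑ i ∈ s, f i ⊗ₜ[K] g i) (z : A) :
    P.ractB w z = ∑ i ∈ s, P.pair z (f i) • g i := by
  simp [ractB, hz]

theorem pair_ractB (x z : A) (w : B) : P.pair x (P.ractB w z) = P.pair (z * x) w := by
  obtain ⟨S, hS⟩ := hB.exists_comul_eq_sum w
  simp [P.ractB_eq_sum hS, P.pair_mul_eq_sum hS, mul_comm]

theorem ractB_eq_smul {e : A} {c : K} (he : ∀ x, e * x = c • x) (y : B) :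
    P.ractB y e = c • y :=
  sub_eq_zero.mp <| P.nondeg_right _ fun x => by simp [pair_ractB, he]

theorem lact_ractB {f g : ι → A} {u : A} (hz : hA.comul u = ∑ i ∈ s, f i ⊗ₜ[K] g i) (w : B)
    (z : A) : P.lact (P.ractB w z) u = ∑ i ∈ s, P.pair (z * g i) w • f i := by
  simp [P.lact_eq_sum hz, pair_ractB]

theorem comul_ractB {f g : ι → B} {w : B} (hz : hB.comul w = ∑ i ∈ s, f i ⊗ₜ[K] g i) (z : A) :
    hB.comul (P.ractB w z) = ∑ i ∈ s, P.ractB (f i) z ⊗ₜ[K] g i := by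
  choose T hT using hB.exists_comul_eq_sum
  let G := (TensorProduct.lid K (B ⊗[K] B)).toLinearMap ∘ₗ rTensor (B ⊗[K] B) (P.pair z)
  have key := hB.coassoc_sum G hz (fun i => hT (f i)) (fun i => hT (g i))
  simp only [G, coe_comp, Function.comp_apply, rTensor_tmul, LinearEquiv.coe_coe, lid_tmul] at key
  rw [P.ractB_eq_sum hz, map_sum]
  calc ∑ i ∈ s, hB.comul (P.pair z (f i) • g i)
      = ∑ i ∈ s, ∑ q ∈ T (g i), P.pair z (f i) • q.1 ⊗ₜ[K] q.2 :=
        Finset.sum_congr rfl fun i _ => by rw [map_smul, hT, Finset.smul_sum]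
    _ = ∑ i ∈ s, ∑ p ∈ T (f i), P.pair z p.1 • p.2 ⊗ₜ[K] g i := key.symm
    _ = ∑ i ∈ s, P.ractB (f i) z ⊗ₜ[K] g i := by
        simp [P.ractB_eq_sum (hT _), sum_tmul, smul_tmul']

/-- The commutation rule `b a = (b₍₁₎ ▶ a) b₍₂₎` of `A # B`. -/
noncomputable def heisenbergTwist : B ⊗[K] A →ₗ[K] A ⊗[K] B :=
  lift ((rTensorHom B ∘ₗ P.lactₗ.flip).flip ∘ₗ hB.comul)

/-- The commutation rule `b a = (b₍₁₎ ▶ a ◀ S⁻¹(b₍₃₎)) b₍₂₎` of `A ⋈ B`. -/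
noncomputable def drinfeldTwist : B ⊗[K] A →ₗ[K] A ⊗[K] B :=
  rTensor B (lift P.ractₗ ∘ₗ lTensor A hB.antipode.symm.toLinearMap) ∘ₗ
    (TensorProduct.assoc K A B B).symm.toLinearMap ∘ₗ
    lTensor A (TensorProduct.comm K B B).toLinearMap ∘ₗ lTensor A hB.comul ∘ₗ P.heisenbergTwist

noncomputable def heisenbergMul : (A ⊗[K] B) →ₗ[K] (A ⊗[K] B) →ₗ[K] (A ⊗[K] B) :=
  twistedMul P.heisenbergTwist

noncomputable def drinfeldMul : (A ⊗[K] B) →ₗ[K] (A ⊗[K] B) →ₗ[K] (A ⊗[K] B) :=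
  twistedMul P.drinfeldTwist

theorem heisenbergTwist_tmul (b : B) (a : A) :
    P.heisenbergTwist (b ⊗ₜ a) = rTensor B (P.lactₗ.flip a) (hB.comul b) := by
  simp [heisenbergTwist]

theorem heisenbergMul_tmul {f g : ι → B} {b : B} (hz : hB.comul b = ∑ i ∈ s, f i ⊗ₜ[K] g i)
    (a a' : A) (b' : B) :
    P.heisenbergMul (a ⊗ₜ b) (a' ⊗ₜ b') = ∑ i ∈ s, (a * P.lact (f i) a') ⊗ₜ (g i * b') := by
  simp [heisenbergMul, twistedMul_tmul, heisenbergTwist_tmul, hz]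

theorem drinfeldMul_tmul {b₁ b₂ b₃ : ι → B} {b : B}
    (hz : hB.comul2 b = ∑ i ∈ s, b₁ i ⊗ₜ[K] (b₂ i ⊗ₜ[K] b₃ i)) (a a' : A) (b' : B) :
    P.drinfeldMul (a ⊗ₜ b) (a' ⊗ₜ b')
      = ∑ i ∈ s, (a * P.ract (P.lact (b₁ i) a') (hB.antipode.symm (b₃ i))) ⊗ₜ (b₂ i * b') := by
  have hcomm : lTensor A hB.comul (rTensor B (P.lactₗ.flip a') (hB.comul b))
      = rTensor (B ⊗[K] B) (P.lactₗ.flip a') (hB.comul2 b) := by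
    rw [RegularMultiplierHopf.comul2, ← comp_apply (lTensor A hB.comul), lTensor_comp_rTensor,
      ← rTensor_comp_lTensor]
    rfl
  simp [drinfeldMul, twistedMul_tmul, drinfeldTwist, heisenbergTwist_tmul, hcomm, hz]

noncomputable def actionA : A →ₗ[K] (A ⊗[K] B) →ₗ[K] (A ⊗[K] B) :=
  lift ((mapBilinear (RingHom.id K) A B A B).flip.compl₁₂
    (P.ractBₗ.flip ∘ₗ hA.antipode.symm.toLinearMap) hA.adjointCop) ∘ₗ hA.comul

noncomputable def actionB : B →ₗ[K] (A ⊗[K] B) →ₗ[K] (A ⊗[K] B) :=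
  lift ((mapBilinear (RingHom.id K) A B A B).compl₁₂ P.lactₗ hB.adjoint) ∘ₗ hB.comul

/-- `(a ⋈ b) · h = (a ⋈ 1) · ((1 ⋈ b) · h)`, where `actionA a` and `actionB b` are the actions of
`a ⋈ 1` and `1 ⋈ b`. -/
noncomputable def action : (A ⊗[K] B) →ₗ[K] (A ⊗[K] B) →ₗ[K] (A ⊗[K] B) :=
  lift ((llcomp K (A ⊗[K] B) (A ⊗[K] B) (A ⊗[K] B)).compl₁₂ P.actionA P.actionB)

theorem actionA_tmul {f g : ι → A} {a : A} (hz : hA.comul a = ∑ i ∈ s, f i ⊗ₜ[K] g i)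
    (x : A) (y : B) :
    P.actionA a (x ⊗ₜ y)
      = ∑ i ∈ s, hA.adjointCop (g i) x ⊗ₜ P.ractB y (hA.antipode.symm (f i)) := by
  simp [actionA, hz]

theorem actionB_tmul {f g : ι → B} {b : B} (hz : hB.comul b = ∑ i ∈ s, f i ⊗ₜ[K] g i)
    (x : A) (y : B) :
    P.actionB b (x ⊗ₜ y) = ∑ i ∈ s, P.lact (f i) x ⊗ₜ hB.adjoint (g i) y := by
  simp [actionB, hz]

theorem action_tmul (a : A) (b : B) : P.action (a ⊗ₜ b) = P.actionA a ∘ₗ P.actionB b :=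
  rfl

theorem actionA_tmul_of_comul2 {a₁ a₂ a₃ : ι → A} {a : A}
    (hz : hA.comul2 a = ∑ i ∈ s, a₁ i ⊗ₜ[K] (a₂ i ⊗ₜ[K] a₃ i)) (x : A) (y : B) :
    P.actionA a (x ⊗ₜ y) = ∑ i ∈ s,
      (a₃ i * x * hA.antipode.symm (a₂ i)) ⊗ₜ P.ractB y (hA.antipode.symm (a₁ i)) := by
  choose T hT using hA.exists_comul_eq_sum
  let Θ := map (P.ractBₗ y ∘ₗ hA.antipode.symm.toLinearMap)
    (mul' K A ∘ₗ map (mulRight K x) hA.antipode.symm.toLinearMap ∘ₗ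
      (TensorProduct.comm K A A).toLinearMap)
  have hΘ : P.actionA a (x ⊗ₜ y) = TensorProduct.comm K B A (Θ (hA.comul2 a)) := by
    simp [Θ, P.actionA_tmul (hT a), hA.adjointCop_apply (hT _), RegularMultiplierHopf.comul2, hT]
  simp [hΘ, hz, Θ, mul_assoc]

theorem actionB_tmul_of_comul2 {b₁ b₂ b₃ : ι → B} {b : B}
    (hz : hB.comul2 b = ∑ i ∈ s, b₁ i ⊗ₜ[K] (b₂ i ⊗ₜ[K] b₃ i)) (x : A) (y : B) :
    P.actionB b (x ⊗ₜ y) = ∑ i ∈ s, P.lact (b₁ i) x ⊗ₜ (b₂ i * y * hB.antipode (b₃ i)) := by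
  choose T hT using hB.exists_comul_eq_sum
  let Θ := map (P.lactₗ.flip x) (mul' K B ∘ₗ map (mulRight K y) hB.antipode.toLinearMap)
  have hΘ : P.actionB b (x ⊗ₜ y) = Θ (hB.comul2 b) := by
    simp [Θ, P.actionB_tmul (hT b), hB.adjoint_apply (hT _), RegularMultiplierHopf.comul2, hT]
  simp [hΘ, hz, Θ]

theorem action_tmul_tmul {a₁ a₂ a₃ : ι → A} {b₁ b₂ b₃ : κ → B} {a : A} {b : B}
    (ha : hA.comul2 a = ∑ i ∈ s, a₁ i ⊗ₜ[K] (a₂ i ⊗ₜ[K] a₃ i))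
    (hb : hB.comul2 b = ∑ j ∈ t, b₁ j ⊗ₜ[K] (b₂ j ⊗ₜ[K] b₃ j)) (a' : A) (b' : B) :
    P.action (a ⊗ₜ b) (a' ⊗ₜ b') = ∑ i ∈ s, ∑ j ∈ t,
      (a₃ i * P.lact (b₁ j) a' * hA.antipode.symm (a₂ i)) ⊗ₜ
        P.ractB (b₂ j * b' * hB.antipode (b₃ j)) (hA.antipode.symm (a₁ i)) := by
  simp only [action_tmul, comp_apply, P.actionB_tmul_of_comul2 hb, map_sum,
    P.actionA_tmul_of_comul2 ha]
  exact Finset.sum_comm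

theorem sum_heisenbergMul_ractB_antipode_symm {f g : ι → A} {a : A}
    (hz : hA.comul a = ∑ i ∈ s, f i ⊗ₜ[K] g i) (x : A) (y c : B) :
    ∑ i ∈ s, P.heisenbergMul (x ⊗ₜ P.ractB y (hA.antipode.symm (g i))) (f i ⊗ₜ c)
      = (x * a) ⊗ₜ (y * c) := by
  choose TA hTA using hA.exists_comul_eq_sum
  choose TB hTB using hB.exists_comul_eq_sum
  let G := map (mulLeft K x) (mulRight K c ∘ₗ P.ractBₗ y ∘ₗ mul' K A ∘ₗ
    (TensorProduct.comm K A A).toLinearMap ∘ₗ lTensor A hA.antipode.symm.toLinearMap)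
  have key := hA.coassoc_sum G hz (fun i => hTA (f i)) (fun i => hTA (g i))
  simp only [G, coe_comp, Function.comp_apply, map_tmul, lTensor_tmul, LinearEquiv.coe_coe,
    comm_tmul, mul'_apply, mulLeft_apply, mulRight_apply, ractBₗ_apply] at key
  have hterm : ∀ i, P.heisenbergMul (x ⊗ₜ P.ractB y (hA.antipode.symm (g i))) (f i ⊗ₜ c)
      = ∑ p ∈ TA (f i), (x * p.1) ⊗ₜ (P.ractB y (hA.antipode.symm (g i) * p.2) * c) := by
    intro i
    rw [P.heisenbergMul_tmul (P.comul_ractB (hTB y) _)]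
    simp only [P.lact_ractB (hTA (f i)), P.ractB_eq_sum (hTB y), Finset.mul_sum, Finset.sum_mul,
      mul_smul_comm, smul_mul_assoc, sum_tmul, tmul_sum, ← smul_tmul', tmul_smul]
    exact Finset.sum_comm
  have hcollapse : ∀ i, ∑ q ∈ TA (g i), (x * f i) ⊗ₜ (P.ractB y (hA.antipode.symm q.2 * q.1) * c)
      = hA.counit (g i) • ((x * f i) ⊗ₜ[K] (y * c)) := by
    intro i
    have hsum : ∑ q ∈ TA (g i), P.ractB y (hA.antipode.symm q.2 * q.1) = hA.counit (g i) • y := by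
      rw [← P.ractB_eq_smul (hA.sum_antipode_symm_mul_mul (hTA (g i))) y]
      exact (map_sum (P.ractBₗ y) _ _).symm
    rw [← tmul_smul, ← smul_mul_assoc, ← hsum, Finset.sum_mul, tmul_sum]
  rw [Finset.sum_congr rfl fun i _ => hterm i, key, Finset.sum_congr rfl fun i _ => hcollapse i,
    ← hA.sum_counit_smul_right hz]
  simp [Finset.mul_sum, sum_tmul, smul_tmul', mul_smul_comm]

theorem sum_heisenbergMul_actionA {f g : ι → A} {a : A}
    (hz : hA.comul a = ∑ i ∈ s, f i ⊗ₜ[K] g i) (k : A ⊗[K] B) (c : B) :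
    ∑ i ∈ s, P.heisenbergMul (P.actionA (g i) k) (f i ⊗ₜ c)
      = map (mulLeft K a) (mulRight K c) k := by
  induction k using TensorProduct.induction_on with
  | zero => simp
  | add k k' hk hk' => simp only [map_add, LinearMap.add_apply, Finset.sum_add_distrib, hk, hk']
  | tmul x y =>
    choose T hT using hA.exists_comul_eq_sum
    let κ := (TensorProduct.comm K B A).toLinearMap ∘ₗ
      map (P.ractBₗ y ∘ₗ hA.antipode.symm.toLinearMap) (hA.adjointCop.flip x)
    let G := lift ((P.heisenbergMul.flip ∘ₗ (TensorProduct.mk K A B).flip c).compl₂ κ)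
    have key := hA.coassoc_sum G hz (fun i => hT (f i)) (fun i => hT (g i))
    simp only [G, κ, lift.tmul, flip_apply, compl₂_apply, coe_comp, Function.comp_apply,
      LinearEquiv.coe_coe, map_tmul, comm_tmul, mk_apply, ractBₗ_apply] at key
    calc ∑ i ∈ s, P.heisenbergMul (P.actionA (g i) (x ⊗ₜ y)) (f i ⊗ₜ c)
        = ∑ i ∈ s, ∑ q ∈ T (g i),
            P.heisenbergMul (hA.adjointCop q.2 x ⊗ₜ P.ractB y (hA.antipode.symm q.1))
              (f i ⊗ₜ c) := by
          simp only [P.actionA_tmul (hT _), map_sum, LinearMap.sum_apply]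
      _ = ∑ i ∈ s, ∑ p ∈ T (f i),
            P.heisenbergMul (hA.adjointCop (g i) x ⊗ₜ P.ractB y (hA.antipode.symm p.2))
              (p.1 ⊗ₜ c) :=
          key.symm
      _ = ∑ i ∈ s, (hA.adjointCop (g i) x * f i) ⊗ₜ[K] (y * c) :=
          Finset.sum_congr rfl fun i _ => P.sum_heisenbergMul_ractB_antipode_symm (hT _) _ _ _
      _ = map (mulLeft K a) (mulRight K c) (x ⊗ₜ y) := by
          rw [← sum_tmul, hA.sum_adjointCop_mul hz]
          rfl

theorem sum_map_mul_actionB {f g : ι → B} {b' : B}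
    (hz : hB.comul b' = ∑ i ∈ s, f i ⊗ₜ[K] g i) (a' : A) (k : A ⊗[K] B) :
    ∑ i ∈ s, map (mulLeft K a') (mulRight K (g i)) (P.actionB (f i) k)
      = P.heisenbergMul (a' ⊗ₜ b') k := by
  induction k using TensorProduct.induction_on with
  | zero => simp
  | add k k' hk hk' => simp only [map_add, Finset.sum_add_distrib, hk, hk']
  | tmul x y =>
    choose T hT using hB.exists_comul_eq_sum
    let G := map (mulLeft K a' ∘ₗ P.lactₗ.flip x) (mul' K B ∘ₗ rTensor B (hB.adjoint.flip y))
    have key := hB.coassoc_sum G hz (fun i => hT (f i)) (fun i => hT (g i))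
    simp only [G, coe_comp, Function.comp_apply, map_tmul, rTensor_tmul, flip_apply,
      mul'_apply, mulLeft_apply, lactₗ_apply] at key
    simp only [P.actionB_tmul (hT _), map_sum, map_tmul, mulLeft_apply, mulRight_apply, key,
      ← tmul_sum, hB.sum_adjoint_mul (hT _), P.heisenbergMul_tmul hz]

theorem heisenbergMul_action_coaction (h h' : A ⊗[K] B) :
    lift (P.heisenbergMul ∘ₗ P.action.flip h) (heisenbergCoaction hA hB h')
      = P.heisenbergMul h' h := by
  induction h' using TensorProduct.induction_on with
  | zero => simp
  | add h' h'' ih ih' => simp only [map_add, ih, ih', LinearMap.add_apply]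
  | tmul a' b' =>
    obtain ⟨SA, hSA⟩ := hA.exists_comul_eq_sum a'
    obtain ⟨SB, hSB⟩ := hB.exists_comul_eq_sum b'
    rw [heisenbergCoaction_tmul hSA hSB, ← P.sum_map_mul_actionB hSB, Finset.sum_comm]
    simp only [map_sum, lift.tmul, coe_comp, Function.comp_apply, flip_apply, action_tmul]
    exact Finset.sum_congr rfl fun q _ => P.sum_heisenbergMul_actionA hSA _ _

end MHAPairing

/-- Let `𝓓 = A ⋈ B` be the Drinfel'd double and `𝓗 = A # B` the
Heisenberg double, regarded as a Yetter-Drinfel'd `𝓓`-module algebra via the action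
`(a ⋈ b) · (a' # b') = a₍₃₎(b₍₁₎ ▶ a')S⁻¹(a₍₂₎) # (b₍₂₎ b' S(b₍₃₎)) ◀ S⁻¹(a₍₁₎)` and the
coaction `Γ` determined by `((a' ⋈ b') ⊗ 1)Γ(a # b) = (a' ⋈ b')(a₍₂₎ ⋈ b₍₁₎) ⊗ (a₍₁₎ # b₍₂₎)`.
Then `𝓗` is braided `𝓓`-commutative: for all `h, h' ∈ 𝓗` one has
`h' h = (h'₍₋₁₎ · h) h'₍₀₎`. -/
theorem heisenberg_braided_commutative
    {K : Type} [Field K]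
    {A : Type} [NonUnitalRing A] [Module K A] [SMulCommClass K A A] [IsScalarTower K A A]
    {B : Type} [NonUnitalRing B] [Module K B] [SMulCommClass K B B] [IsScalarTower K B B]
    {hA : RegularMultiplierHopf K A} {hB : RegularMultiplierHopf K B}
    (P : MHAPairing K A B hA hB) :
    ∃ (dmul : (A ⊗[K] B) →ₗ[K] (A ⊗[K] B) →ₗ[K] (A ⊗[K] B))
      (hmul : (A ⊗[K] B) →ₗ[K] (A ⊗[K] B) →ₗ[K] (A ⊗[K] B))
      (act : (A ⊗[K] B) →ₗ[K] (A ⊗[K] B) →ₗ[K] (A ⊗[K] B))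
      (Γ : (A ⊗[K] B) →ₗ[K] (A ⊗[K] B) ⊗[K] (A ⊗[K] B)),
      -- the Drinfel'd double product `(a ⋈ b)(a' ⋈ b') = a(b₍₁₎ ▶ a' ◀ S⁻¹(b₍₃₎)) ⋈ b₍₂₎ b'`
      (∀ (a a' : A) (b b' : B) (s : Finset ℕ) (b1 b2 b3 : ℕ → B),
        hB.comul2 b = ∑ i ∈ s, b1 i ⊗ₜ[K] (b2 i ⊗ₜ[K] b3 i) →
        dmul (a ⊗ₜ[K] b) (a' ⊗ₜ[K] b')
          = ∑ i ∈ s,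
              (a * P.ract (P.lact (b1 i) a') (hB.antipode.symm (b3 i))) ⊗ₜ[K] ((b2 i) * b')) ∧
      -- the Heisenberg double product `(a # b)(a' # b') = a(b₍₁₎ ▶ a') # b₍₂₎ b'`
      (∀ (a a' : A) (b b' : B) (s : Finset ℕ) (b1 b2 : ℕ → B),
        hB.comul b = ∑ i ∈ s, b1 i ⊗ₜ[K] b2 i →
        hmul (a ⊗ₜ[K] b) (a' ⊗ₜ[K] b')
          = ∑ i ∈ s, (a * P.lact (b1 i) a') ⊗ₜ[K] ((b2 i) * b')) ∧
      -- the action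
      -- `(a ⋈ b) · (a' # b') = a₍₃₎(b₍₁₎ ▶ a')S⁻¹(a₍₂₎) # (b₍₂₎ b' S(b₍₃₎)) ◀ S⁻¹(a₍₁₎)`
      (∀ (a a' : A) (b b' : B) (s t : Finset ℕ) (a1 a2 a3 : ℕ → A) (b1 b2 b3 : ℕ → B),
        hA.comul2 a = ∑ i ∈ s, a1 i ⊗ₜ[K] (a2 i ⊗ₜ[K] a3 i) →
        hB.comul2 b = ∑ j ∈ t, b1 j ⊗ₜ[K] (b2 j ⊗ₜ[K] b3 j) →
        act (a ⊗ₜ[K] b) (a' ⊗ₜ[K] b')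
          = ∑ i ∈ s, ∑ j ∈ t,
              (a3 i * P.lact (b1 j) a' * hA.antipode.symm (a2 i)) ⊗ₜ[K]
                (P.ractB ((b2 j) * b' * hB.antipode (b3 j)) (hA.antipode.symm (a1 i)))) ∧
      -- the coaction, determined by
      -- `((a' ⋈ b') ⊗ 1)Γ(a # b) = (a' ⋈ b')(a₍₂₎ ⋈ b₍₁₎) ⊗ (a₍₁₎ # b₍₂₎)`
      (∀ (a : A) (b : B) (s t : Finset ℕ) (a1 a2 : ℕ → A) (b1 b2 : ℕ → B),
        hA.comul a = ∑ i ∈ s, a1 i ⊗ₜ[K] a2 i →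
        hB.comul b = ∑ j ∈ t, b1 j ⊗ₜ[K] b2 j →
        ∀ g : A ⊗[K] B,
          (LinearMap.rTensor (A ⊗[K] B) (dmul g)) (Γ (a ⊗ₜ[K] b))
            = ∑ i ∈ s, ∑ j ∈ t,
                (dmul g (a2 i ⊗ₜ[K] b1 j)) ⊗ₜ[K] (a1 i ⊗ₜ[K] b2 j)) ∧
      -- braided `𝓓`-commutativity: `h' h = (h'₍₋₁₎ · h) h'₍₀₎`
      (∀ (h h' : A ⊗[K] B) (s : Finset ℕ) (g : ℕ → A ⊗[K] B) (w : ℕ → A ⊗[K] B),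
        Γ h' = ∑ k ∈ s, g k ⊗ₜ[K] w k →
        hmul h' h = ∑ k ∈ s, hmul (act (g k) h) (w k)) := by
  refine ⟨P.drinfeldMul, P.heisenbergMul, P.action, heisenbergCoaction hA hB,
    fun a a' b b' s b₁ b₂ b₃ hb => P.drinfeldMul_tmul hb a a' b',
    fun a a' b b' s b₁ b₂ hb => P.heisenbergMul_tmul hb a a' b',
    fun a a' b b' s t a₁ a₂ a₃ b₁ b₂ b₃ ha hb => P.action_tmul_tmul ha hb a' b',
    fun a b s t a₁ a₂ b₁ b₂ ha hb g => ?_, fun h h' s g w hΓ => ?_⟩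
  · simp [heisenbergCoaction_tmul ha hb, map_sum]
  · rw [← P.heisenbergMul_action_coaction h h', hΓ, map_sum]
    simp
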